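/- With notation as in the p-adic graph kernel setting (G ⊂ ℚ_p finite, K = ⊔_{I∈G}(I+p^Nℤ_p), J_N(x,y) = p^N ∑_{J,K} A_{JK} 1_{J+p^Nℤ_p}(x) 1_{K+p^Nℤ_p}(y), γ_I = ∑_K A_{IK}), the operator (Lf)(x) = ∫_K (f(y) − f(x)) J_N(x,y) dy satisfies the L²-bound ‖Lf‖_{L²(K)} ≤ 2 (∑_{J∈G} γ_J²)^{1/2} ‖f‖_{L²(K)} for all f ∈ C(K, ℂ). -/

import Mathlib

/-! On a ball `I + p^N ℤ_p` (of Haar measure `p^{-N}`) the kernel `J_N` is constant in each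
variable, so there `L f = C_I - γ_I f` with `C_I = p^N ∑_K A_{IK} ∫_{K + p^N ℤ_p} f`.
Cauchy–Schwarz on the balls gives `p^{-N} |C_I|² ≤ γ_I² ‖f‖²`, where `‖f‖ = ‖f‖_{L²(K)}`, and
`|a - b|² ≤ 2|a|² + 2|b|²` then gives `∫_{I + p^N ℤ_p} |L f|² ≤ 4 γ_I² ‖f‖²`; summing over the
disjoint balls gives the bound. The Haar measure of the balls comes from splitting a ball of
radius `p^{-n}` into `p` disjoint translates of the ball of radius `p^{-(n+1)}`. -/

open MeasureTheory Metric

namespace Padic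

variable {p : ℕ} [hp : Fact p.Prime]

lemma norm_le_one_iff_exists_norm_sub_natCast_le {y : ℚ_[p]} :
    ‖y‖ ≤ 1 ↔ ∃ i < p, ‖y - i‖ ≤ (p : ℝ) ^ (-1 : ℤ) := by
  constructor
  · intro hy
    set z : ℤ_[p] := ⟨y, hy⟩
    obtain ⟨i, hi, hmem⟩ := PadicInt.exists_mem_range z
    refine ⟨i, hi, ?_⟩
    have h : ‖y - i‖ < (p : ℝ) ^ (0 : ℤ) := by
      have hlt := PadicInt.mem_nonunits.mp hmem
      rw [PadicInt.norm_def, PadicInt.coe_sub, PadicInt.coe_natCast] at hlt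
      simpa using hlt
    simpa using (norm_lt_pow_iff_norm_le_pow_sub_one _ 0).mp h
  · rintro ⟨i, -, hi⟩
    calc ‖y‖ = ‖(y - i) + i‖ := by rw [sub_add_cancel]
      _ ≤ max ‖y - i‖ ‖(i : ℚ_[p])‖ := nonarchimedean _ _
      _ ≤ 1 := max_le (hi.trans (zpow_le_one_of_nonpos₀ (mod_cast hp.out.one_lt.le) (by norm_num)))
          (by simpa using norm_int_le_one (p := p) i)

lemma norm_natCast_sub_natCast_eq_one {i j : ℕ} (hi : i < p) (hj : j < p) (hij : i ≠ j) :
    ‖(i : ℚ_[p]) - j‖ = 1 := by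
  refine le_antisymm ?_ (not_lt.mp fun hlt => hij ?_)
  · simpa using norm_int_le_one (p := p) ((i : ℤ) - j)
  · have hdvd : (p : ℤ) ∣ (i : ℤ) - j := norm_intCast_lt_one_iff.mp (by simpa using hlt)
    have := Int.eq_zero_of_abs_lt_dvd hdvd (by rw [abs_sub_lt_iff]; omega)
    omega

lemma mem_closedBall_mul_zpow_iff {x c : ℚ_[p]} {n : ℤ} {ρ : ℝ} :
    x ∈ closedBall (c * p ^ n) (ρ * p ^ (-n)) ↔ x * p ^ (-n) ∈ closedBall c ρ := by
  have hp0 : (p : ℚ_[p]) ≠ 0 := Nat.cast_ne_zero.mpr hp.out.ne_zero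
  have hx : x - c * p ^ n = (x * p ^ (-n) - c) * p ^ n := by
    rw [sub_mul, mul_assoc, ← zpow_add₀ hp0, neg_add_cancel, zpow_zero, mul_one]
  rw [mem_closedBall, mem_closedBall, dist_eq_norm, dist_eq_norm, hx, norm_mul, norm_p_zpow,
    mul_le_mul_iff_left₀ (zpow_pos (mod_cast hp.out.pos) _)]

lemma closedBall_zpow_eq_biUnion (n : ℤ) :
    closedBall (0 : ℚ_[p]) (p ^ (-n)) =
      ⋃ i ∈ Finset.range p, closedBall ((i : ℚ_[p]) * p ^ n) (p ^ (-(n + 1))) := by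
  have hp0 : (p : ℝ) ≠ 0 := Nat.cast_ne_zero.mpr hp.out.ne_zero
  have hsmall : (p : ℝ) ^ (-(n + 1)) = p ^ (-1 : ℤ) * p ^ (-n) := by
    rw [← zpow_add₀ hp0]; ring_nf
  ext x
  rw [← zero_mul ((p : ℚ_[p]) ^ n), ← one_mul ((p : ℝ) ^ (-n)), mem_closedBall_mul_zpow_iff,
    mem_closedBall, dist_zero_right, norm_le_one_iff_exists_norm_sub_natCast_le]
  simp only [Set.mem_iUnion, Finset.mem_range, exists_prop, hsmall, mem_closedBall_mul_zpow_iff]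
  simp only [mem_closedBall, dist_eq_norm]

lemma pairwiseDisjoint_closedBall_natCast_mul_zpow (n : ℤ) :
    (Finset.range p : Set ℕ).PairwiseDisjoint
      fun i => closedBall ((i : ℚ_[p]) * p ^ n) (p ^ (-(n + 1))) := by
  have hp0 : (p : ℝ) ≠ 0 := Nat.cast_ne_zero.mpr hp.out.ne_zero
  have hsmall : (p : ℝ) ^ (-(n + 1)) = p ^ (-1 : ℤ) * p ^ (-n) := by
    rw [← zpow_add₀ hp0]; ring_nf
  intro i hi j hj hij
  simp only [Finset.coe_range, Set.mem_Iio] at hi hj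
  refine Set.disjoint_left.mpr fun x hxi hxj => ?_
  rw [hsmall, mem_closedBall_mul_zpow_iff, mem_closedBall, dist_eq_norm] at hxi hxj
  have hlt : (p : ℝ) ^ (-1 : ℤ) < 1 := zpow_lt_one_of_neg₀ (mod_cast hp.out.one_lt) (by norm_num)
  have : ‖(i : ℚ_[p]) - j‖ ≤ p ^ (-1 : ℤ) :=
    calc ‖(i : ℚ_[p]) - j‖ = ‖-(x * p ^ (-n) - i) + (x * p ^ (-n) - j)‖ := by ring_nf
      _ ≤ max ‖-(x * p ^ (-n) - i)‖ ‖x * p ^ (-n) - j‖ := nonarchimedean _ _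
      _ ≤ p ^ (-1 : ℤ) := by rw [norm_neg]; exact max_le hxi hxj
  rw [norm_natCast_sub_natCast_eq_one hi hj hij] at this
  linarith

lemma addHaar_closedBall_zpow [MeasurableSpace ℚ_[p]] [BorelSpace ℚ_[p]] (μ : Measure ℚ_[p])
    [μ.IsAddHaarMeasure] (hμ : μ (closedBall 0 1) = 1) (c : ℚ_[p]) (n : ℤ) :
    μ (closedBall c (p ^ (-n))) = ENNReal.ofReal (p ^ (-n)) := by
  have hp0 : (p : ℝ) ≠ 0 := Nat.cast_ne_zero.mpr hp.out.ne_zero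
  have split (m : ℤ) : μ (closedBall 0 (p ^ (-m))) = p * μ (closedBall 0 (p ^ (-(m + 1)))) := by
    rw [closedBall_zpow_eq_biUnion m, measure_biUnion_finset
      (pairwiseDisjoint_closedBall_natCast_mul_zpow m) fun _ _ => measurableSet_closedBall]
    simp only [Measure.addHaar_closedBall_center μ _ ((p : ℝ) ^ (-(m + 1))), Finset.sum_const,
      Finset.card_range, nsmul_eq_mul]
  have scale (m : ℤ) :
      (p : ENNReal) * ENNReal.ofReal (p ^ (-(m + 1))) = ENNReal.ofReal (p ^ (-m)) := by
    rw [← ENNReal.ofReal_natCast, ← ENNReal.ofReal_mul (Nat.cast_nonneg p), ← zpow_one_add₀ hp0]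
    ring_nf
  rw [Measure.addHaar_closedBall_center]
  induction n using Int.induction_on with
  | zero => simpa using hμ
  | succ i ih =>
    rwa [← ENNReal.mul_right_inj (Nat.cast_ne_zero.mpr hp.out.ne_zero) (ENNReal.natCast_ne_top p),
      ← split, scale]
  | pred i ih =>
    rw [split, sub_add_cancel, ih, ← scale (-i - 1), sub_add_cancel]

end Padic

lemma sum_sum_mul_ite_norm_sub_le_eq {X : Type*} [SeminormedAddCommGroup X] {G : Finset X}
    {ρ : ℝ} (hdisj : (G : Set X).PairwiseDisjoint (closedBall · ρ)) (A : X → X → ℝ)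
    {i j x y : X} (hi : i ∈ G) (hj : j ∈ G) (hx : x ∈ closedBall i ρ) (hy : y ∈ closedBall j ρ) :
    ∑ J ∈ G, ∑ K ∈ G, A J K * (if ‖x - J‖ ≤ ρ then 1 else 0) * (if ‖y - K‖ ≤ ρ then 1 else 0) =
      A i j := by
  have hout {z l : X} (hl : l ∈ G) (hz : z ∈ closedBall l ρ) (m : X) (hm : m ∈ G) (hml : m ≠ l) :
      ¬‖z - m‖ ≤ ρ := fun h => hml (hdisj.elim_set hm hl z (mem_closedBall_iff_norm.mpr h) hz)
  rw [Finset.sum_eq_single_of_mem i hi fun J hJ hJi => by simp [hout hi hx J hJ hJi],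
    Finset.sum_eq_single_of_mem j hj fun K hK hKj => by simp [hout hj hy K hK hKj],
    if_pos (mem_closedBall_iff_norm.mp hx), if_pos (mem_closedBall_iff_norm.mp hy), mul_one,
    mul_one]

section CellKernel

variable {α ι E : Type*} [MeasurableSpace α] {μ : Measure α} [NormedAddCommGroup E]
  [NormedSpace ℝ E]

lemma sq_norm_integral_le [IsFiniteMeasure μ] {f : α → E} (hf : MemLp f 2 μ) :
    ‖∫ x, f x ∂μ‖ ^ 2 ≤ μ.real Set.univ * ∫ x, ‖f x‖ ^ 2 ∂μ := by
  have hholder := integral_mul_le_Lp_mul_Lq_of_nonneg Real.HolderConjugate.two_two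
    (Filter.Eventually.of_forall fun x => norm_nonneg (f x))
    (Filter.Eventually.of_forall fun _ => zero_le_one)
    (by simpa using hf.norm) (by simpa using memLp_const (μ := μ) (p := 2) (1 : ℝ))
  simp only [Real.rpow_two, one_pow, mul_one, integral_const, smul_eq_mul,
    ← Real.sqrt_eq_rpow] at hholder
  have hsq : 0 ≤ ∫ x, ‖f x‖ ^ 2 ∂μ := integral_nonneg fun x => by positivity
  calc ‖∫ x, f x ∂μ‖ ^ 2 ≤ (∫ x, ‖f x‖ ∂μ) ^ 2 :=
        pow_le_pow_left₀ (norm_nonneg _) (norm_integral_le_integral_norm f) 2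
    _ ≤ (√(∫ x, ‖f x‖ ^ 2 ∂μ) * √(μ.real Set.univ)) ^ 2 :=
        pow_le_pow_left₀ (integral_nonneg fun x => norm_nonneg _) hholder 2
    _ = μ.real Set.univ * ∫ x, ‖f x‖ ^ 2 ∂μ := by
        rw [mul_pow, Real.sq_sqrt hsq, Real.sq_sqrt measureReal_nonneg, mul_comm]

lemma integral_sq_norm_sub_smul_le [IsFiniteMeasure μ] (c : E) (a : ℝ) {f : α → E}
    (hf : MemLp f 2 μ) :
    ∫ x, ‖c - a • f x‖ ^ 2 ∂μ ≤ 2 * μ.real Set.univ * ‖c‖ ^ 2 + 2 * a ^ 2 * ∫ x, ‖f x‖ ^ 2 ∂μ := by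
  have hf2 : Integrable (fun x => ‖f x‖ ^ 2) μ := (memLp_two_iff_integrable_sq_norm hf.1).1 hf
  have hpt (x : α) : ‖c - a • f x‖ ^ 2 ≤ 2 * ‖c‖ ^ 2 + 2 * a ^ 2 * ‖f x‖ ^ 2 :=
    calc ‖c - a • f x‖ ^ 2 ≤ (‖c‖ + |a| * ‖f x‖) ^ 2 := by
          gcongr
          exact (norm_sub_le _ _).trans_eq (by rw [norm_smul, Real.norm_eq_abs])
      _ ≤ 2 * (‖c‖ ^ 2 + (|a| * ‖f x‖) ^ 2) := add_sq_le
      _ = 2 * ‖c‖ ^ 2 + 2 * a ^ 2 * ‖f x‖ ^ 2 := by rw [mul_pow, sq_abs]; ring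
  calc ∫ x, ‖c - a • f x‖ ^ 2 ∂μ ≤ ∫ x, (2 * ‖c‖ ^ 2 + 2 * a ^ 2 * ‖f x‖ ^ 2) ∂μ :=
        integral_mono_of_nonneg (Filter.Eventually.of_forall fun x => by positivity)
          ((integrable_const _).add (hf2.const_mul _)) (Filter.Eventually.of_forall hpt)
    _ = 2 * μ.real Set.univ * ‖c‖ ^ 2 + 2 * a ^ 2 * ∫ x, ‖f x‖ ^ 2 ∂μ := by
        rw [integral_add (integrable_const _) (hf2.const_mul _), integral_const, integral_const_mul,
          smul_eq_mul]
        ring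

lemma sq_norm_setIntegral_le_of_subset {s t : Set α} (hs : μ s ≠ ⊤) (hst : s ⊆ t) {f : α → E}
    (hf : MemLp f 2 (μ.restrict t)) :
    ‖∫ x in s, f x ∂μ‖ ^ 2 ≤ μ.real s * ∫ x in t, ‖f x‖ ^ 2 ∂μ := by
  have : IsFiniteMeasure (μ.restrict s) := isFiniteMeasure_restrict.mpr hs
  calc ‖∫ x in s, f x ∂μ‖ ^ 2 ≤ μ.real s * ∫ x in s, ‖f x‖ ^ 2 ∂μ := by
        simpa using sq_norm_integral_le (hf.mono_measure (Measure.restrict_mono hst le_rfl))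
    _ ≤ μ.real s * ∫ x in t, ‖f x‖ ^ 2 ∂μ := by
        refine mul_le_mul_of_nonneg_left ?_ measureReal_nonneg
        exact setIntegral_mono_set ((memLp_two_iff_integrable_sq_norm hf.1).1 hf)
          (Filter.Eventually.of_forall fun x => by positivity) hst.eventuallyLE

noncomputable def kernelOperator (μ : Measure α) (S : Set α) (k : α → α → ℝ) (f : α → E)
    (x : α) : E :=
  ∫ y in S, k x y • (f y - f x) ∂μ

variable {G : Finset ι} {B : ι → Set α} {r : ℝ} {A : ι → ι → ℝ} {k : α → α → ℝ} {f : α → E}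

lemma sq_norm_smul_sum_smul_setIntegral_le (hr : 0 < r)
    (hvol : ∀ j ∈ G, μ (B j) = ENNReal.ofReal r) {i : ι} (hA : ∀ j ∈ G, 0 ≤ A i j)
    (hf : MemLp f 2 (μ.restrict (⋃ j ∈ G, B j))) :
    r * ‖r⁻¹ • ∑ j ∈ G, A i j • ∫ y in B j, f y ∂μ‖ ^ 2 ≤
      (∑ j ∈ G, A i j) ^ 2 * ∫ x in ⋃ j ∈ G, B j, ‖f x‖ ^ 2 ∂μ := by
  set Φ2 := ∫ x in ⋃ j ∈ G, B j, ‖f x‖ ^ 2 ∂μ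
  have hcell (j : ι) (hj : j ∈ G) : ‖∫ y in B j, f y ∂μ‖ ≤ √(r * Φ2) := by
    refine Real.le_sqrt_of_sq_le ?_
    have hfin : μ (B j) ≠ ⊤ := by rw [hvol j hj]; exact ENNReal.ofReal_ne_top
    have h := sq_norm_setIntegral_le_of_subset hfin (Set.subset_biUnion_of_mem (u := B) hj) hf
    rwa [measureReal_def, hvol j hj, ENNReal.toReal_ofReal hr.le] at h
  have hnorm : ‖r⁻¹ • ∑ j ∈ G, A i j • ∫ y in B j, f y ∂μ‖ ≤ r⁻¹ * ((∑ j ∈ G, A i j) * √(r * Φ2)) :=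
    calc ‖r⁻¹ • ∑ j ∈ G, A i j • ∫ y in B j, f y ∂μ‖
          ≤ r⁻¹ * ∑ j ∈ G, A i j * ‖∫ y in B j, f y ∂μ‖ := by
          rw [norm_smul, Real.norm_of_nonneg (inv_nonneg.mpr hr.le)]
          refine mul_le_mul_of_nonneg_left ((norm_sum_le _ _).trans_eq ?_) (by positivity)
          refine Finset.sum_congr rfl fun j hj => ?_
          rw [norm_smul, Real.norm_of_nonneg (hA j hj)]
      _ ≤ r⁻¹ * ((∑ j ∈ G, A i j) * √(r * Φ2)) := by
          rw [Finset.sum_mul]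
          gcongr with j hj
          · exact hA j hj
          · exact hcell j hj
  calc r * ‖r⁻¹ • ∑ j ∈ G, A i j • ∫ y in B j, f y ∂μ‖ ^ 2
        ≤ r * (r⁻¹ * ((∑ j ∈ G, A i j) * √(r * Φ2))) ^ 2 := by gcongr
    _ = (∑ j ∈ G, A i j) ^ 2 * Φ2 := by
        rw [mul_pow, mul_pow, Real.sq_sqrt (by positivity)]
        field_simp

variable [CompleteSpace E]

lemma kernelOperator_eq_of_mem (hB : ∀ j ∈ G, MeasurableSet (B j))
    (hdisj : (G : Set ι).PairwiseDisjoint B) (hr : 0 < r)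
    (hvol : ∀ j ∈ G, μ (B j) = ENNReal.ofReal r)
    (hk : ∀ i ∈ G, ∀ j ∈ G, ∀ x ∈ B i, ∀ y ∈ B j, k x y = r⁻¹ * A i j)
    (hf : ∀ j ∈ G, IntegrableOn f (B j) μ) {i : ι} (hi : i ∈ G) {x : α} (hx : x ∈ B i) :
    kernelOperator μ (⋃ j ∈ G, B j) k f x =
      r⁻¹ • ∑ j ∈ G, A i j • ∫ y in B j, f y ∂μ - (∑ j ∈ G, A i j) • f x := by
  have hfin (j : ι) (hj : j ∈ G) : μ (B j) ≠ ⊤ := by rw [hvol j hj]; exact ENNReal.ofReal_ne_top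
  have hcell (j : ι) (hj : j ∈ G) :
      ∫ y in B j, k x y • (f y - f x) ∂μ = r⁻¹ • A i j • ∫ y in B j, f y ∂μ - A i j • f x := by
    rw [setIntegral_congr_fun (hB j hj) fun y hy => by rw [hk i hi j hj x hx y hy], integral_smul,
      integral_sub (hf j hj) (integrableOn_const (hfin j hj)), setIntegral_const, measureReal_def,
      hvol j hj, ENNReal.toReal_ofReal hr.le, smul_sub, smul_smul, mul_smul,
      mul_right_comm, inv_mul_cancel₀ hr.ne', one_mul]
  have hint (j : ι) (hj : j ∈ G) : IntegrableOn (fun y => k x y • (f y - f x)) (B j) μ := by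
    refine IntegrableOn.congr_fun (((hf j hj).sub (integrableOn_const (C := f x) (hfin j hj))).smul
      (r⁻¹ * A i j)) (fun y hy => ?_) (hB j hj)
    simp only [Pi.smul_apply, Pi.sub_apply, hk i hi j hj x hx y hy]
  rw [kernelOperator, integral_biUnion_finset G hB hdisj hint, Finset.sum_congr rfl hcell,
    Finset.sum_sub_distrib, Finset.smul_sum, Finset.sum_smul]

theorem integral_sq_norm_kernelOperator_le (hB : ∀ j ∈ G, MeasurableSet (B j))
    (hdisj : (G : Set ι).PairwiseDisjoint B) (hr : 0 < r)
    (hvol : ∀ j ∈ G, μ (B j) = ENNReal.ofReal r) (hA : ∀ i ∈ G, ∀ j ∈ G, 0 ≤ A i j)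
    (hk : ∀ i ∈ G, ∀ j ∈ G, ∀ x ∈ B i, ∀ y ∈ B j, k x y = r⁻¹ * A i j)
    (hf : MemLp f 2 (μ.restrict (⋃ j ∈ G, B j))) :
    ∫ x in ⋃ i ∈ G, B i, ‖kernelOperator μ (⋃ j ∈ G, B j) k f x‖ ^ 2 ∂μ ≤
      4 * (∑ i ∈ G, (∑ j ∈ G, A i j) ^ 2) * ∫ x in ⋃ j ∈ G, B j, ‖f x‖ ^ 2 ∂μ := by
  set Φ2 := ∫ x in ⋃ j ∈ G, B j, ‖f x‖ ^ 2 ∂μ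
  set γ : ι → ℝ := fun i => ∑ j ∈ G, A i j
  set C : ι → E := fun i => r⁻¹ • ∑ j ∈ G, A i j • ∫ y in B j, f y ∂μ
  have hfin (j : ι) (hj : j ∈ G) : IsFiniteMeasure (μ.restrict (B j)) :=
    isFiniteMeasure_restrict.mpr (by rw [hvol j hj]; exact ENNReal.ofReal_ne_top)
  have hfj (j : ι) (hj : j ∈ G) : MemLp f 2 (μ.restrict (B j)) :=
    hf.mono_measure (Measure.restrict_mono (Set.subset_biUnion_of_mem (u := B) hj) le_rfl)
  have hLf (i : ι) (hi : i ∈ G) :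
      Set.EqOn (fun x => ‖kernelOperator μ (⋃ j ∈ G, B j) k f x‖ ^ 2)
        (fun x => ‖C i - γ i • f x‖ ^ 2) (B i) := fun x hx => by
    beta_reduce
    rw [kernelOperator_eq_of_mem hB hdisj hr hvol hk
      (fun j hj => have := hfin j hj; (hfj j hj).integrable one_le_two) hi hx]
  have hint (i : ι) (hi : i ∈ G) :
      IntegrableOn (fun x => ‖kernelOperator μ (⋃ j ∈ G, B j) k f x‖ ^ 2) (B i) μ := by
    have := hfin i hi
    have hM := (memLp_const (C i)).sub ((hfj i hi).const_smul (γ i))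
    exact IntegrableOn.congr_fun ((memLp_two_iff_integrable_sq_norm hM.1).1 hM) (hLf i hi).symm
      (hB i hi)
  have hcell (i : ι) (hi : i ∈ G) :
      ∫ x in B i, ‖kernelOperator μ (⋃ j ∈ G, B j) k f x‖ ^ 2 ∂μ ≤ 4 * γ i ^ 2 * Φ2 := by
    have := hfin i hi
    have hloc : ∫ x in B i, ‖f x‖ ^ 2 ∂μ ≤ Φ2 :=
      setIntegral_mono_set ((memLp_two_iff_integrable_sq_norm hf.1).1 hf)
        (Filter.Eventually.of_forall fun x => by positivity)
        (Set.subset_biUnion_of_mem (u := B) hi).eventuallyLE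
    rw [setIntegral_congr_fun (hB i hi) (hLf i hi)]
    calc ∫ x in B i, ‖C i - γ i • f x‖ ^ 2 ∂μ
        ≤ 2 * r * ‖C i‖ ^ 2 + 2 * γ i ^ 2 * ∫ x in B i, ‖f x‖ ^ 2 ∂μ := by
          simpa [measureReal_def, hvol i hi, hr.le] using
            integral_sq_norm_sub_smul_le (C i) (γ i) (hfj i hi)
      _ ≤ 2 * (γ i ^ 2 * Φ2) + 2 * γ i ^ 2 * Φ2 := by
          rw [mul_assoc 2 r]
          exact add_le_add
            (mul_le_mul_of_nonneg_left (sq_norm_smul_sum_smul_setIntegral_le hr hvol (hA i hi) hf)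
              zero_le_two)
            (mul_le_mul_of_nonneg_left hloc (by positivity))
      _ = 4 * γ i ^ 2 * Φ2 := by ring
  rw [integral_biUnion_finset G hB hdisj hint, Finset.mul_sum, Finset.sum_mul]
  exact Finset.sum_le_sum hcell

end CellKernel

theorem stmt13 (p : ℕ) [Fact p.Prime] [MeasurableSpace ℚ_[p]] [BorelSpace ℚ_[p]]
    (μ : Measure ℚ_[p]) [μ.IsAddHaarMeasure]
    (hμ : μ (Metric.closedBall 0 1) = 1)
    (G : Finset ℚ_[p]) (N : ℤ)
    (hdisj : (G : Set ℚ_[p]).PairwiseDisjoint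
      (fun I => Metric.closedBall I ((p : ℝ)^(-N))))
    (Kset : Set ℚ_[p]) (hK : Kset = ⋃ I ∈ G, Metric.closedBall I ((p : ℝ)^(-N)))
    (A : ℚ_[p] → ℚ_[p] → ℝ) (hA : ∀ J K, 0 ≤ A J K)
    (γ : ℚ_[p] → ℝ) (hγ : ∀ I, γ I = ∑ K ∈ G, A I K)
    (JN : ℚ_[p] → ℚ_[p] → ℝ)
    (hJN : ∀ x y, JN x y = (p : ℝ)^N * ∑ J ∈ G, ∑ K ∈ G, A J K *
      (if ‖x - J‖ ≤ (p : ℝ)^(-N) then 1 else 0) *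
      (if ‖y - K‖ ≤ (p : ℝ)^(-N) then 1 else 0))
    (f : ℚ_[p] → ℂ) (hf : Continuous f)
    (Lf : ℚ_[p] → ℂ)
    (hLf : ∀ x, Lf x = ∫ y in Kset, (f y - f x) * (JN x y : ℂ) ∂μ) :
    Real.sqrt (∫ x in Kset, ‖Lf x‖^2 ∂μ) ≤
      2 * Real.sqrt (∑ J ∈ G, γ J ^ 2) * Real.sqrt (∫ x in Kset, ‖f x‖^2 ∂μ) := by
  subst hK
  have hr : (0 : ℝ) < (p : ℝ) ^ (-N) := zpow_pos (mod_cast (Fact.out : p.Prime).pos) _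
  have hkernel (i : ℚ_[p]) (hi : i ∈ G) (j : ℚ_[p]) (hj : j ∈ G) (x : ℚ_[p])
      (hx : x ∈ closedBall i ((p : ℝ) ^ (-N))) (y : ℚ_[p])
      (hy : y ∈ closedBall j ((p : ℝ) ^ (-N))) : JN x y = ((p : ℝ) ^ (-N))⁻¹ * A i j := by
    rw [hJN, sum_sum_mul_ite_norm_sub_le_eq hdisj A hi hj hx hy, zpow_neg, inv_inv]
  have hf2 : MemLp f 2 (μ.restrict (⋃ I ∈ G, closedBall I ((p : ℝ) ^ (-N)))) :=
    (memLp_two_iff_integrable_sq_norm hf.aestronglyMeasurable).2 <|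
      (hf.norm.pow 2).continuousOn.integrableOn_compact <|
        G.finite_toSet.isCompact_biUnion fun i _ => isCompact_closedBall _ _
  have hbound := integral_sq_norm_kernelOperator_le (fun _ _ => measurableSet_closedBall) hdisj hr
    (fun c _ => Padic.addHaar_closedBall_zpow μ hμ c N) (fun i _ j _ => hA i j) hkernel hf2
  have hLf' : Lf = kernelOperator μ (⋃ I ∈ G, closedBall I ((p : ℝ) ^ (-N))) JN f :=
    funext fun x => by simp only [hLf, kernelOperator, Complex.real_smul, mul_comm]
  simp only [← hγ, ← hLf'] at hbound
  refine (Real.sqrt_le_sqrt hbound).trans_eq ?_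
  rw [Real.sqrt_mul (by positivity), Real.sqrt_mul zero_le_four, show (4 : ℝ) = 2 ^ 2 by norm_num,
    Real.sqrt_sq zero_le_two]
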